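/- arXiv:2303.02636 — 2 statements merged into one kernel-verified Lean document; each statement's English description precedes it below -/
import Mathlib

section
/- Let R := End_K(V) for V an infinite-dimensional vector space over a field K, and let I ⊆ R be the two-sided ideal of endomorphisms of finite rank. Then Hom_R(R/I, R) = 0 while R/I ≠ 0; in particular R is not a cogenerator of R-Mod. -/
/-!
If `f : R/I → R` is `R`-linear, then `χ := f 1` is killed on the left by every finite-rank
`ψ`. Taking `ψ` of rank one with `ψ (χ v) ≠ 0` whenever `χ v ≠ 0` forces `χ = 0`, hence
`f = 0`. Meanwhile `1 ∉ I` because `V` is infinite-dimensional, so `R/I ≠ 0` is a nonzero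
module with no nonzero map to `R`.
-/

/-- The two-sided ideal of finite-rank endomorphisms, viewed as a left submodule
of `R = End_K(V)` over itself. -/
def finRankIdeal (K V : Type) [Field K] [AddCommGroup V] [Module K V] :
    Submodule (Module.End K V) (Module.End K V) where
  carrier := {ψ : Module.End K V | FiniteDimensional K (LinearMap.range ψ)}
  add_mem' := by
    intro ψ χ hψ hχ
    have h : LinearMap.range (ψ + χ) ≤ LinearMap.range ψ ⊔ LinearMap.range χ := by
      rintro _ ⟨v, rfl⟩
      exact Submodule.add_mem_sup (LinearMap.mem_range_self ψ v) (LinearMap.mem_range_self χ v)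
    haveI : FiniteDimensional K ↥(LinearMap.range ψ) := hψ
    haveI : FiniteDimensional K ↥(LinearMap.range χ) := hχ
    have : FiniteDimensional K ↥(LinearMap.range ψ ⊔ LinearMap.range χ) :=
      Submodule.finiteDimensional_sup _ _
    exact Submodule.finiteDimensional_of_le h
  zero_mem' := by
    show FiniteDimensional K ↥(LinearMap.range (0 : Module.End K V))
    rw [LinearMap.range_zero]
    infer_instance
  smul_mem' := by
    intro φ ψ hψ
    show FiniteDimensional K ↥(LinearMap.range (φ * ψ))
    rw [Module.End.mul_eq_comp, LinearMap.range_comp]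
    haveI : FiniteDimensional K ↥(LinearMap.range ψ) := hψ
    exact Module.Finite.map _ _

section QuotientRing

variable {R M : Type*} [Ring R] [AddCommGroup M] [Module R M] {I : Submodule R R}

theorem LinearMap.smul_apply_mk_one_eq_zero (f : (R ⧸ I) →ₗ[R] M) {r : R} (hr : r ∈ I) :
    r • f (Submodule.Quotient.mk 1) = 0 := by
  rw [← f.map_smul, ← Submodule.Quotient.mk_smul, smul_eq_mul, mul_one,
    (Submodule.Quotient.mk_eq_zero I).mpr hr, map_zero]

theorem LinearMap.eq_zero_of_apply_mk_one (f : (R ⧸ I) →ₗ[R] M)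
    (hf : f (Submodule.Quotient.mk 1) = 0) : f = 0 :=
  Submodule.linearMap_qext I (LinearMap.ext_ring hf)

end QuotientRing

section FinRankIdeal

variable {K V : Type} [Field K] [AddCommGroup V] [Module K V]

theorem smulRight_mem_finRankIdeal (g : Module.Dual K V) (v : V) :
    g.smulRight v ∈ finRankIdeal K V := by
  show FiniteDimensional K (LinearMap.range (g.smulRight v))
  refine Submodule.finiteDimensional_of_le (S₂ := K ∙ v) ?_
  rintro _ ⟨w, rfl⟩
  exact Submodule.smul_mem _ _ (Submodule.mem_span_singleton_self v)

theorem eq_zero_of_forall_mem_finRankIdeal_mul_eq_zero {χ : Module.End K V}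
    (hχ : ∀ ψ ∈ finRankIdeal K V, ψ * χ = 0) : χ = 0 := by
  ext v
  by_contra hv
  obtain ⟨g, hg⟩ : ∃ g : Module.Dual K V, g (χ v) ≠ 0 := by
    by_contra! hall
    exact hv ((Module.forall_dual_apply_eq_zero_iff K _).mp hall)
  have hψ := LinearMap.congr_fun (hχ _ (smulRight_mem_finRankIdeal g (χ v))) v
  simp only [Module.End.mul_apply, LinearMap.smulRight_apply, LinearMap.zero_apply,
    smul_eq_zero] at hψ
  exact hψ.elim hg hv

theorem one_notMem_finRankIdeal (hV : ¬ Module.Finite K V) :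
    (1 : Module.End K V) ∉ finRankIdeal K V := by
  intro h
  have : FiniteDimensional K (LinearMap.range (LinearMap.id : Module.End K V)) := h
  rw [LinearMap.range_id] at this
  exact hV (Module.Finite.equiv Submodule.topEquiv)

end FinRankIdeal

/-- For `R := End_K(V)` with `V` an infinite-dimensional `K`-vector space and `I ⊆ R`
the ideal of finite-rank endomorphisms, `Hom_R(R/I, R) = 0` while `R/I ≠ 0`; in
particular `R` is not a cogenerator of `R`-Mod. -/
theorem end_not_cogenerator (K V : Type) [Field K] [AddCommGroup V] [Module K V]
    (hV : ¬ Module.Finite K V) :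
    (∀ f : (Module.End K V ⧸ finRankIdeal K V) →ₗ[Module.End K V] Module.End K V, f = 0) ∧
    Nontrivial (Module.End K V ⧸ finRankIdeal K V) ∧
    ¬ (∀ (N : Type) [AddCommGroup N] [Module (Module.End K V) N],
        (∀ f : N →ₗ[Module.End K V] Module.End K V, f = 0) → Subsingleton N) := by
  have hom_eq_zero : ∀ f : (Module.End K V ⧸ finRankIdeal K V) →ₗ[Module.End K V]
      Module.End K V, f = 0 := fun f =>
    f.eq_zero_of_apply_mk_one <| eq_zero_of_forall_mem_finRankIdeal_mul_eq_zero
      fun _ hψ => f.smul_apply_mk_one_eq_zero hψ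
  have quotient_nontrivial : Nontrivial (Module.End K V ⧸ finRankIdeal K V) :=
    Submodule.Quotient.nontrivial_iff.mpr fun htop =>
      one_notMem_finRankIdeal hV (htop ▸ Submodule.mem_top)
  refine ⟨hom_eq_zero, quotient_nontrivial, fun hcogen => ?_⟩
  exact not_subsingleton _ (hcogen _ hom_eq_zero)
end

section
/- Let R be a ring, N a finitely presented left R-module, and M a left R-module that is an fp-cogenerator such that every finitely generated submodule of a finitely presented module is finitely presented (R left coherent). Given two quotient maps ε' : N ↠ N' and ε'' : N ↠ N'' in R-mod, the subgroup Hom_R(N', M) of Hom_R(N, M) is contained in the subgroup Hom_R(N'', M) if and only if there exists α : N'' → N' with ε' = α ∘ ε''. -/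
/-! Precomposition with `ε''` maps `Hom(N'', M)` onto the maps `N → M` vanishing on `ker ε''`,
so the inclusion of behaviors says that every `φ : N' → M` vanishes on `K = ε'(ker ε'')`.
By coherence `K` is finitely presented, so faithfulness of `Hom(−, M)` applied to the inclusion
`K → N'` forces `K = 0`, i.e. `ker ε'' ≤ ker ε'`, and `ε'` factors through the quotient map `ε''`. -/

namespace LinearMap

variable {R : Type*} [Ring R] {N N' N'' M : Type*} [AddCommGroup N] [Module R N]
  [AddCommGroup N'] [Module R N'] [AddCommGroup N''] [Module R N''] [AddCommGroup M] [Module R M]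

theorem exists_eq_comp_of_ker_le {f : N →ₗ[R] N'} {g : N →ₗ[R] N''}
    (hg : Function.Surjective g) (hker : ker g ≤ ker f) : ∃ α : N'' →ₗ[R] N', f = α ∘ₗ g := by
  let e := g.quotKerEquivOfSurjective hg
  refine ⟨(ker g).liftQ f hker ∘ₗ e.symm.toLinearMap, ?_⟩
  ext x
  have he : e.symm (g x) = Submodule.Quotient.mk x :=
    e.symm_apply_eq.mpr rfl
  simp [he]

theorem range_precomp_subset_of_eq_comp {f : N →ₗ[R] N'} {g : N →ₗ[R] N''} {α : N'' →ₗ[R] N'}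
    (hfg : f = α ∘ₗ g) :
    Set.range (fun φ : N' →ₗ[R] M => φ ∘ₗ f) ⊆ Set.range (fun ψ : N'' →ₗ[R] M => ψ ∘ₗ g) := by
  rintro _ ⟨φ, rfl⟩
  exact ⟨φ ∘ₗ α, by rw [hfg]; rfl⟩

theorem map_ker_le_ker_of_range_precomp_subset {f : N →ₗ[R] N'} {g : N →ₗ[R] N''}
    (hsub : Set.range (fun φ : N' →ₗ[R] M => φ ∘ₗ f) ⊆
      Set.range (fun ψ : N'' →ₗ[R] M => ψ ∘ₗ g))
    (φ : N' →ₗ[R] M) : (ker g).map f ≤ ker φ := by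
  rintro _ ⟨x, hx, rfl⟩
  obtain ⟨ψ, hψ⟩ := hsub ⟨φ, rfl⟩
  have hψx : ψ (g x) = φ (f x) := congrArg (fun χ : N →ₗ[R] M => χ x) hψ
  rw [mem_ker, ← hψx, mem_ker.mp hx, map_zero]

end LinearMap

theorem Submodule.eq_bot_of_forall_le_ker {R P M : Type*} [Ring R] [AddCommGroup P] [Module R P]
    [AddCommGroup M] [Module R M] {K : Submodule R P}
    (hfaithful : ∀ g h : K →ₗ[R] P, (∀ φ : P →ₗ[R] M, φ ∘ₗ g = φ ∘ₗ h) → g = h)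
    (hK : ∀ φ : P →ₗ[R] M, K ≤ LinearMap.ker φ) : K = ⊥ := by
  have hzero : K.subtype = 0 :=
    hfaithful _ _ fun φ => LinearMap.ext fun x => by simpa using hK φ x.2
  rw [← K.range_subtype, hzero, LinearMap.range_zero]

theorem behavior_inclusion_iff_general (R : Type) [Ring R]
    (hcoh : ∀ (P : Type) [AddCommGroup P] [Module R P], Module.FinitePresentation R P →
      ∀ Q : Submodule R P, Q.FG → Module.FinitePresentation R Q)
    (M : Type) [AddCommGroup M] [Module R M]
    (hcog : ∀ (N N' : Type) [AddCommGroup N] [Module R N] [AddCommGroup N'] [Module R N'],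
      Module.FinitePresentation R N → Module.FinitePresentation R N' →
      ∀ g h : N →ₗ[R] N', (∀ φ : N' →ₗ[R] M, φ.comp g = φ.comp h) → g = h)
    (N N' N'' : Type) [AddCommGroup N] [Module R N] [AddCommGroup N'] [Module R N']
    [AddCommGroup N''] [Module R N'']
    (hN : Module.FinitePresentation R N) (hN' : Module.FinitePresentation R N')
    (hN'' : Module.FinitePresentation R N'')
    (ε' : N →ₗ[R] N') (ε'' : N →ₗ[R] N'')
    (hε'' : Function.Surjective ε'') :
    (Set.range (fun φ : N' →ₗ[R] M => φ.comp ε') ⊆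
        Set.range (fun ψ : N'' →ₗ[R] M => ψ.comp ε'')) ↔
      ∃ α : N'' →ₗ[R] N', ε' = α.comp ε'' := by
  refine ⟨fun hsub => ?_, fun ⟨_, hα⟩ => LinearMap.range_precomp_subset_of_eq_comp hα⟩
  have hKfg : ((LinearMap.ker ε'').map ε').FG :=
    (Module.FinitePresentation.fg_ker ε'' hε'').map ε'
  have hKbot : (LinearMap.ker ε'').map ε' = ⊥ :=
    Submodule.eq_bot_of_forall_le_ker (hcog _ N' (hcoh N' hN' _ hKfg) hN')
      (LinearMap.map_ker_le_ker_of_range_precomp_subset hsub)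
  exact LinearMap.exists_eq_comp_of_ker_le hε'' (LinearMap.le_ker_iff_map.mpr hKbot)

/-- **Wood's criterion for inclusion of behaviors.**  Let `R` be left coherent (in the
form: every finitely generated submodule of a finitely presented module is finitely
presented), `M` an fp-cogenerator (`Hom(−, M)` is faithful on finitely presented
modules), `N` finitely presented, and `ε' : N ↠ N'`, `ε'' : N ↠ N''` quotient maps in
`R`-mod.  Then the subgroup `Hom_R(N', M)` of `Hom_R(N, M)` is contained in the
subgroup `Hom_R(N'', M)` if and only if there exists `α : N'' → N'` with
`ε' = α ∘ ε''`. -/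
theorem behavior_inclusion_iff (R : Type) [Ring R]
    (hcoh : ∀ (P : Type) [AddCommGroup P] [Module R P], Module.FinitePresentation R P →
      ∀ Q : Submodule R P, Q.FG → Module.FinitePresentation R Q)
    (M : Type) [AddCommGroup M] [Module R M]
    (hcog : ∀ (N N' : Type) [AddCommGroup N] [Module R N] [AddCommGroup N'] [Module R N'],
      Module.FinitePresentation R N → Module.FinitePresentation R N' →
      ∀ g h : N →ₗ[R] N', (∀ φ : N' →ₗ[R] M, φ.comp g = φ.comp h) → g = h)
    (N N' N'' : Type) [AddCommGroup N] [Module R N] [AddCommGroup N'] [Module R N']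
    [AddCommGroup N''] [Module R N'']
    (hN : Module.FinitePresentation R N) (hN' : Module.FinitePresentation R N')
    (hN'' : Module.FinitePresentation R N'')
    (ε' : N →ₗ[R] N') (ε'' : N →ₗ[R] N'')
    (hε' : Function.Surjective ε') (hε'' : Function.Surjective ε'') :
    (Set.range (fun φ : N' →ₗ[R] M => φ.comp ε') ⊆
        Set.range (fun ψ : N'' →ₗ[R] M => ψ.comp ε'')) ↔
      ∃ α : N'' →ₗ[R] N', ε' = α.comp ε'' :=
  behavior_inclusion_iff_general R hcoh M hcog N N' N'' hN hN' hN'' ε' ε'' hε''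
end
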